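/- arXiv:1806.06908 — 2 statements merged into one kernel-verified Lean document; each statement's English description precedes it below -/
import Mathlib

section
/- For all g₁, g₂ > 0 and all t₁, t₂ ∈ (0,1), the function a ↦ g₁·KL(a‖t₁) + g₂·KL(a‖t₂) on [0,1] attains its infimum at the unique point a* = c/(1+c), where c = [ (t₁/(1−t₁))^{g₁} · (t₂/(1−t₂))^{g₂} ]^{1/(g₁+g₂)}. -/
/-- Bernoulli Kullback–Leibler divergence `KL(a‖b)`, with the convention `0·log 0 = 0`. -/
noncomputable def klBer (a b : ℝ) : ℝ :=
  a * Real.log (a / b) + (1 - a) * Real.log ((1 - a) / (1 - b))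

/-!
Write `logit x = log (x / (1 - x))`. Moving the reference point of `KL(a‖t)` from `t` to `b`
changes it by `a · log (b / t) + (1 - a) · log ((1 - b) / (1 - t))`, an affine function of `a`.
If `logit b` is the `g`-weighted mean of `logit t₁` and `logit t₂`, the coefficients of `a` and
of `1 - a` in the weighted sum of these corrections agree, so it does not depend on `a` and
`g₁ KL(a‖t₁) + g₂ KL(a‖t₂) = (g₁ + g₂) KL(a‖b) + const`.
Gibbs' inequality `KL(a‖b) > 0` for `a ≠ b` then makes `b` the unique minimizer, and
`b = c / (1 + c)` is exactly the point with `logit b = log c`.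
-/

open Real InformationTheory

lemma mul_log_div_eq_add (x : ℝ) {b t : ℝ} (hb : b ≠ 0) (ht : t ≠ 0) :
    x * log (x / t) = x * log (x / b) + x * log (b / t) := by
  rcases eq_or_ne x 0 with rfl | hx
  · simp
  · rw [← mul_add, ← log_mul (div_ne_zero hx hb) (div_ne_zero hb ht), div_mul_div_cancel₀ hb]

lemma klBer_eq_klBer_add {b t : ℝ} (hb : b ∈ Set.Ioo (0 : ℝ) 1) (ht : t ∈ Set.Ioo (0 : ℝ) 1)
    (a : ℝ) :
    klBer a t = klBer a b + (a * log (b / t) + (1 - a) * log ((1 - b) / (1 - t))) := by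
  obtain ⟨hb₀, hb₁⟩ := hb
  obtain ⟨ht₀, ht₁⟩ := ht
  rw [klBer, klBer, mul_log_div_eq_add a hb₀.ne' ht₀.ne',
    mul_log_div_eq_add (1 - a) (sub_ne_zero.2 hb₁.ne') (sub_ne_zero.2 ht₁.ne')]
  ring

lemma klBer_self {b : ℝ} (hb : b ∈ Set.Ioo (0 : ℝ) 1) : klBer b b = 0 := by
  simp [klBer, div_self hb.1.ne', div_self (sub_ne_zero.2 hb.2.ne')]

lemma klBer_eq_klFun {a b : ℝ} (hb : b ∈ Set.Ioo (0 : ℝ) 1) :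
    klBer a b = b * klFun (a / b) + (1 - b) * klFun ((1 - a) / (1 - b)) := by
  have hb₀ : b ≠ 0 := hb.1.ne'
  have hb₁ : 1 - b ≠ 0 := sub_ne_zero.2 hb.2.ne'
  simp only [klBer, klFun_apply]
  field_simp
  ring

lemma klBer_pos {a b : ℝ} (ha : a ∈ Set.Icc (0 : ℝ) 1) (hb : b ∈ Set.Ioo (0 : ℝ) 1)
    (hab : a ≠ b) : 0 < klBer a b := by
  obtain ⟨hb₀, hb₁⟩ := hb
  have hq : 0 ≤ (1 - a) / (1 - b) := div_nonneg (by linarith [ha.2]) (by linarith)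
  have hp : 0 ≤ a / b := div_nonneg ha.1 hb₀.le
  have hp_ne : a / b ≠ 1 := fun h => hab ((div_eq_one_iff_eq hb₀.ne').1 h)
  have hpos : 0 < klFun (a / b) :=
    (klFun_nonneg hp).lt_of_ne (Ne.symm (mt (klFun_eq_zero_iff hp).1 hp_ne))
  rw [klBer_eq_klFun ⟨hb₀, hb₁⟩]
  exact add_pos_of_pos_of_nonneg (mul_pos hb₀ hpos)
    (mul_nonneg (sub_nonneg.2 hb₁.le) (klFun_nonneg hq))

section WeightedSum

variable {g₁ g₂ t₁ t₂ b : ℝ}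

lemma weighted_klBer_sub_eq (ht₁ : t₁ ∈ Set.Ioo (0 : ℝ) 1) (ht₂ : t₂ ∈ Set.Ioo (0 : ℝ) 1)
    (hb : b ∈ Set.Ioo (0 : ℝ) 1)
    (hlogit : (g₁ + g₂) * log (b / (1 - b)) =
      g₁ * log (t₁ / (1 - t₁)) + g₂ * log (t₂ / (1 - t₂))) (a : ℝ) :
    g₁ * klBer a t₁ + g₂ * klBer a t₂ - (g₁ * klBer b t₁ + g₂ * klBer b t₂) =
      (g₁ + g₂) * klBer a b := by
  have hslopes : g₁ * log (b / t₁) + g₂ * log (b / t₂) =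
      g₁ * log ((1 - b) / (1 - t₁)) + g₂ * log ((1 - b) / (1 - t₂)) := by
    have hb₁ : 1 - b ≠ 0 := sub_ne_zero.2 hb.2.ne'
    have ht₁₁ : 1 - t₁ ≠ 0 := sub_ne_zero.2 ht₁.2.ne'
    have ht₂₁ : 1 - t₂ ≠ 0 := sub_ne_zero.2 ht₂.2.ne'
    simp only [log_div hb.1.ne' hb₁, log_div ht₁.1.ne' ht₁₁, log_div ht₂.1.ne' ht₂₁,
      log_div hb.1.ne' ht₁.1.ne', log_div hb.1.ne' ht₂.1.ne', log_div hb₁ ht₁₁,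
      log_div hb₁ ht₂₁] at hlogit ⊢
    linarith
  rw [klBer_eq_klBer_add hb ht₁ a, klBer_eq_klBer_add hb ht₂ a, klBer_eq_klBer_add hb ht₁ b,
    klBer_eq_klBer_add hb ht₂ b, klBer_self hb]
  linear_combination (a - b) * hslopes

lemma weighted_klBer_lt (hg : 0 < g₁ + g₂)
    (ht₁ : t₁ ∈ Set.Ioo (0 : ℝ) 1) (ht₂ : t₂ ∈ Set.Ioo (0 : ℝ) 1) (hb : b ∈ Set.Ioo (0 : ℝ) 1)
    (hlogit : (g₁ + g₂) * log (b / (1 - b)) =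
      g₁ * log (t₁ / (1 - t₁)) + g₂ * log (t₂ / (1 - t₂)))
    {a : ℝ} (ha : a ∈ Set.Icc (0 : ℝ) 1) (hab : a ≠ b) :
    g₁ * klBer b t₁ + g₂ * klBer b t₂ < g₁ * klBer a t₁ + g₂ * klBer a t₂ := by
  have := weighted_klBer_sub_eq ht₁ ht₂ hb hlogit a
  have := mul_pos hg (klBer_pos ha hb hab)
  linarith

end WeightedSum

lemma div_one_add_mem_Ioo {c : ℝ} (hc : 0 < c) : c / (1 + c) ∈ Set.Ioo (0 : ℝ) 1 :=
  ⟨by positivity, (div_lt_one (by positivity)).2 (by linarith)⟩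

lemma div_one_add_div_one_sub_div_one_add {c : ℝ} (hc : 0 ≤ c) :
    c / (1 + c) / (1 - c / (1 + c)) = c := by
  have : 1 + c ≠ 0 := by positivity
  field_simp
  ring

lemma mul_log_rpow_one_div_add {x y : ℝ} (hx : 0 < x) (hy : 0 < y) {g₁ g₂ : ℝ}
    (hg : g₁ + g₂ ≠ 0) :
    (g₁ + g₂) * log ((x ^ g₁ * y ^ g₂) ^ (1 / (g₁ + g₂))) = g₁ * log x + g₂ * log y := by
  rw [log_rpow (by positivity), log_mul (by positivity) (by positivity), log_rpow hx,
    log_rpow hy]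
  field_simp

lemma div_one_sub_pos {t : ℝ} (ht : t ∈ Set.Ioo (0 : ℝ) 1) : 0 < t / (1 - t) :=
  div_pos ht.1 (sub_pos.2 ht.2)

/-- **Unique minimizer of the weighted KL sum.**
For `g₁, g₂ > 0` and `t₁, t₂ ∈ (0,1)`, the function `a ↦ g₁ KL(a‖t₁) + g₂ KL(a‖t₂)`
on `[0,1]` attains its infimum at the unique point `a* = c/(1+c)` with
`c = [(t₁/(1-t₁))^{g₁} (t₂/(1-t₂))^{g₂}]^{1/(g₁+g₂)}`. -/
theorem weighted_klBer_unique_minimizer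
    (g₁ g₂ t₁ t₂ : ℝ) (hg₁ : 0 < g₁) (hg₂ : 0 < g₂)
    (ht₁ : t₁ ∈ Set.Ioo (0 : ℝ) 1) (ht₂ : t₂ ∈ Set.Ioo (0 : ℝ) 1)
    (c astar : ℝ)
    (hc : c = ((t₁ / (1 - t₁)) ^ g₁ * (t₂ / (1 - t₂)) ^ g₂) ^ (1 / (g₁ + g₂)))
    (ha : astar = c / (1 + c)) :
    astar ∈ Set.Icc (0 : ℝ) 1 ∧
      ∀ a ∈ Set.Icc (0 : ℝ) 1, a ≠ astar →
        g₁ * klBer astar t₁ + g₂ * klBer astar t₂ <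
          g₁ * klBer a t₁ + g₂ * klBer a t₂ := by
  have hg : 0 < g₁ + g₂ := add_pos hg₁ hg₂
  have hx₁ := div_one_sub_pos ht₁
  have hx₂ := div_one_sub_pos ht₂
  have hc₀ : 0 < c := hc ▸ by positivity
  have hastar : astar ∈ Set.Ioo (0 : ℝ) 1 := ha ▸ div_one_add_mem_Ioo hc₀
  have hlogit : (g₁ + g₂) * log (astar / (1 - astar)) =
      g₁ * log (t₁ / (1 - t₁)) + g₂ * log (t₂ / (1 - t₂)) := by
    rw [ha, div_one_add_div_one_sub_div_one_add hc₀.le, hc,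
      mul_log_rpow_one_div_add hx₁ hx₂ hg.ne']
  exact ⟨Set.Ioo_subset_Icc_self hastar,
    fun a ha hne => weighted_klBer_lt hg ht₁ ht₂ hastar hlogit ha hne⟩
end

section
/- Let r^M denote the common rate value of the equalized solution with uniform weights and M levels. Then for every ε > 0 there exists M₀ such that for all M ≥ M₀, r^M < ε. -/
/-- The pairwise large-deviations rate
`r_{g,h}(p,q) = -(g+h)·log[(1-p)^{g/(g+h)}·(1-q)^{h/(g+h)} + p^{g/(g+h)}·q^{h/(g+h)}]`. -/
noncomputable def pairRate (g h p q : ℝ) : ℝ :=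
  -(g + h) *
    Real.log ((1 - p) ^ (g / (g + h)) * (1 - q) ^ (h / (g + h))
      + p ^ (g / (g + h)) * q ^ (h / (g + h)))

/-- The `i`-th rate (for `1 ≤ i ≤ M-1`) of a level vector `t` with weights `g`:
`r₁ = -g₁·log(1-t₁)`, `rᵢ = r_{g_{i-1},g_i}(t_{i-1},t_i)` for `2 ≤ i ≤ M-2`, and
`r_{M-1} = -g_{M-2}·log(t_{M-2})`. -/
noncomputable def rateAt (M : ℕ) (g t : ℕ → ℝ) (i : ℕ) : ℝ :=
  if i = 1 then -(g 1) * Real.log (1 - t 1)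
  else if i = M - 1 then -(g (M - 2)) * Real.log (t (M - 2))
  else pairRate (g (i - 1)) (g i) (t (i - 1)) (t i)

/-- `t` is an equalized solution with `M` levels for the weights `g`, with common rate `r`:
`t₀ = 0 < t₁ < ⋯ < t_{M-2} < 1 = t_{M-1}` and all of the `M-1` rates equal `r`. -/
def IsEqualizedWithRate (M : ℕ) (g t : ℕ → ℝ) (r : ℝ) : Prop :=
  t 0 = 0 ∧ t (M - 1) = 1 ∧ (∀ i, i < M - 1 → t i < t (i + 1)) ∧
    ∀ i, 1 ≤ i → i ≤ M - 1 → rateAt M g t i = r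

/-- `t` is an equalized solution with `M` levels for the weights `g`. -/
def IsEqualizedSol (M : ℕ) (g t : ℕ → ℝ) : Prop :=
  ∃ r, IsEqualizedWithRate M g t r

/-! Since `√((1-p)(1-q)) + √(pq) ≥ (1 - q) + p`, each rate `r` of an equalized solution with
uniform weights satisfies `e^{-r} ≥ 1 - 2Δ`, where `Δ = tᵢ - tᵢ₋₁` is the gap of its level pair
(for the two end rates this is immediate). The `M - 1` gaps add up to `1`, so one of them is at
most `1 / (M - 1)`; hence `e^{-r^M} ≥ 1 - 2 / (M - 1) → 1`. -/

open Real Filter Topology Finset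

lemma le_exp_log_of_le {x y : ℝ} (h : x ≤ y) : x ≤ exp (log y) := by
  rcases lt_or_ge 0 y with hy | hy
  · rwa [exp_log hy]
  · linarith [exp_pos (log y)]

lemma one_sub_sub_le_sqrt_mul_sqrt_add_sqrt_mul_sqrt {p q : ℝ} (hp : 0 ≤ p) (hpq : p ≤ q)
    (hq : q ≤ 1) : 1 - (q - p) ≤ √(1 - p) * √(1 - q) + √p * √q := by
  have hleft : 1 - q ≤ √(1 - p) * √(1 - q) := calc
    1 - q = √(1 - q) * √(1 - q) := (mul_self_sqrt (by linarith)).symm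
    _ ≤ √(1 - p) * √(1 - q) := by gcongr
  have hright : p ≤ √p * √q := calc
    p = √p * √p := (mul_self_sqrt hp).symm
    _ ≤ √p * √q := by gcongr
  linarith

lemma pairRate_one_one (p q : ℝ) :
    pairRate 1 1 p q = -2 * log (√(1 - p) * √(1 - q) + √p * √q) := by
  simp only [pairRate, sqrt_eq_rpow]
  norm_num

lemma one_sub_two_mul_sub_le_exp_neg_pairRate_one_one {p q : ℝ} (hp : 0 ≤ p) (hpq : p ≤ q)
    (hq : q ≤ 1) : 1 - 2 * (q - p) ≤ exp (-pairRate 1 1 p q) := by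
  have hS := one_sub_sub_le_sqrt_mul_sqrt_add_sqrt_mul_sqrt hp hpq hq
  have hlog : -pairRate 1 1 p q = log ((√(1 - p) * √(1 - q) + √p * √q) ^ 2) := by
    rw [pairRate_one_one, log_pow]
    push_cast
    ring
  rw [hlog]
  exact le_exp_log_of_le (by nlinarith)

namespace IsEqualizedWithRate

variable {M : ℕ} {g t : ℕ → ℝ} {r : ℝ}

lemma strictMonoOn (h : IsEqualizedWithRate M g t r) : StrictMonoOn t (Set.Iic (M - 1)) :=
  strictMonoOn_Iic_of_lt_succ fun m hm => by simpa using h.2.2.1 m hm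

lemma mem_Icc (h : IsEqualizedWithRate M g t r) {j : ℕ} (hj : j ≤ M - 1) : t j ∈ Set.Icc 0 1 :=
  ⟨h.1 ▸ h.strictMonoOn.monotoneOn (Set.mem_Iic.2 (Nat.zero_le _)) hj (Nat.zero_le _),
    h.2.1 ▸ h.strictMonoOn.monotoneOn hj (Set.mem_Iic.2 le_rfl) hj⟩

lemma one_sub_two_mul_sub_le_exp_neg (h : IsEqualizedWithRate M (fun _ => 1) t r) {i : ℕ}
    (hi : 1 ≤ i) (hiM : i ≤ M - 1) : 1 - 2 * (t i - t (i - 1)) ≤ exp (-r) := by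
  have hprev := h.mem_Icc (j := i - 1) (by omega)
  have hcur := h.mem_Icc hiM
  have hrate := h.2.2.2 i hi hiM
  simp only [rateAt, neg_mul, one_mul] at hrate
  split_ifs at hrate with hfirst hlast
  · subst hfirst
    rw [← hrate, neg_neg, Nat.sub_self, h.1]
    exact le_exp_log_of_le (by linarith [hcur.1])
  · subst hlast
    rw [show M - 1 - 1 = M - 2 by omega] at hprev ⊢
    rw [← hrate, neg_neg, h.2.1]
    exact le_exp_log_of_le (by linarith [hprev.2])
  · rw [← hrate]
    exact one_sub_two_mul_sub_le_exp_neg_pairRate_one_one hprev.1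
      (h.strictMonoOn.monotoneOn (Set.mem_Iic.2 (by omega)) hiM (Nat.sub_le i 1)) hcur.2

lemma one_sub_two_div_le_exp_neg (h : IsEqualizedWithRate M (fun _ => 1) t r) (hM : 2 ≤ M) :
    1 - 2 / ((M - 1 : ℕ) : ℝ) ≤ exp (-r) := by
  have hsum : ∑ j ∈ range (M - 1), (t (j + 1) - t j)
      = ∑ _j ∈ range (M - 1), 1 / ((M - 1 : ℕ) : ℝ) := by
    rw [sum_range_sub, h.2.1, h.1, sum_const, card_range, nsmul_eq_mul,
      mul_one_div_cancel (by norm_cast; omega)]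
    ring
  obtain ⟨j, hj, hgap⟩ := exists_le_of_sum_le (nonempty_range_iff.2 (by omega)) hsum.le
  have hbound := h.one_sub_two_mul_sub_le_exp_neg (i := j + 1) (by omega)
    (by rw [mem_range] at hj; omega)
  rw [Nat.add_sub_cancel] at hbound
  calc 1 - 2 / ((M - 1 : ℕ) : ℝ) = 1 - 2 * (1 / ((M - 1 : ℕ) : ℝ)) := by ring
    _ ≤ 1 - 2 * (t (j + 1) - t j) := by linarith
    _ ≤ exp (-r) := hbound

end IsEqualizedWithRate

/-- **The optimal rate vanishes as the number of levels grows.**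
If `r^M` denotes the common rate of the equalized solution with uniform weights and `M`
levels, then for every `ε > 0` there is `M₀` such that `r^M < ε` for all `M ≥ M₀`. -/
theorem equalized_rate_tendsto_zero :
    ∀ ε : ℝ, 0 < ε → ∃ M₀ : ℕ, ∀ M : ℕ, M₀ ≤ M →
      ∀ (t : ℕ → ℝ) (r : ℝ), IsEqualizedWithRate M (fun _ => (1 : ℝ)) t r → r < ε := by
  intro ε hε
  have hgap : Tendsto (fun M : ℕ => 2 / ((M - 1 : ℕ) : ℝ)) atTop (𝓝 0) :=
    (tendsto_const_div_atTop_nhds_zero_nat 2).comp (tendsto_sub_atTop_nat 1)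
  have hpos : 0 < 1 - exp (-ε) := sub_pos.2 (exp_lt_one_iff.2 (neg_neg_of_pos hε))
  obtain ⟨M₀, hM₀⟩ :=
    eventually_atTop.1 ((hgap.eventually (gt_mem_nhds hpos)).and (eventually_ge_atTop 2))
  refine ⟨M₀, fun M hM t r h => ?_⟩
  obtain ⟨hsmall, hM2⟩ := hM₀ M hM
  have hbound := h.one_sub_two_div_le_exp_neg hM2
  exact neg_lt_neg_iff.1 (exp_lt_exp.1 (by linarith))
end
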